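/- (Example: one-dimensional TV regularization, interior case) Let p ≥ 2 and consider the 1D total-variation regularizer ‖Ψᵀ x‖₁ = Σ_{j=1}^{p−1} |x_j − x_{j+1}|, where Ψ = D(p)ᵀ and D(p) is the p × p matrix whose rows 1,…,p−1 are e_j − e_{j+1} and whose last row is zero. Suppose the constant vector x⋄ = x₀·𝟏 belongs to X⋄ ∩ int C for some x₀ ∈ ℝ. Then U = max_{1 ≤ j ≤ p−1} | Σ_{i=1}^{j} [∇L(x₀·𝟏)]_i |, the largest absolute partial sum of the gradient coordinates at x₀·𝟏. -/

import Mathlib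

open Matrix
open scoped RealInnerProductSpace ENNReal

noncomputable section

def rnorm1 {n : ℕ} (z : Fin n → ℝ) : ℝ := ∑ j, |z j|

noncomputable def rnormInf {n : ℕ} (z : Fin n → ℝ) : ℝ := ⨆ j, |z j|

/-- `Ψᵀ x` for a real dictionary `Ψ`. -/
def psiT {p q : ℕ} (Ψ : Matrix (Fin p) (Fin q) ℝ) (x : EuclideanSpace ℝ (Fin p)) :
    Fin q → ℝ :=
  Matrix.mulVec Ψᵀ fun i => x i

def XuSetR {p q : ℕ} (C : Set (EuclideanSpace ℝ (Fin p))) (L : EuclideanSpace ℝ (Fin p) → ℝ)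
    (Ψ : Matrix (Fin p) (Fin q) ℝ) (u : ℝ) : Set (EuclideanSpace ℝ (Fin p)) :=
  {x ∈ C | ∀ χ ∈ C, L x + u * rnorm1 (psiT Ψ x) ≤ L χ + u * rnorm1 (psiT Ψ χ)}

def QSetR {p q : ℕ} (C : Set (EuclideanSpace ℝ (Fin p))) (Ψ : Matrix (Fin p) (Fin q) ℝ) :
    Set (EuclideanSpace ℝ (Fin p)) :=
  {x ∈ C | ∀ χ ∈ C, rnorm1 (psiT Ψ x) ≤ rnorm1 (psiT Ψ χ)}

def XdSetR {p q : ℕ} (C : Set (EuclideanSpace ℝ (Fin p))) (L : EuclideanSpace ℝ (Fin p) → ℝ)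
    (Ψ : Matrix (Fin p) (Fin q) ℝ) : Set (EuclideanSpace ℝ (Fin p)) :=
  {x ∈ QSetR C Ψ | ∀ χ ∈ QSetR C Ψ, L x ≤ L χ}

def UboundR {p q : ℕ} (C : Set (EuclideanSpace ℝ (Fin p))) (L : EuclideanSpace ℝ (Fin p) → ℝ)
    (Ψ : Matrix (Fin p) (Fin q) ℝ) : ℝ≥0∞ :=
  sInf (ENNReal.ofReal '' {u : ℝ | 0 ≤ u ∧ (XuSetR C L Ψ u ∩ QSetR C Ψ).Nonempty})

/-- The `L × L` finite-difference matrix `D(L)`: rows `0,…,L−2` are `e_j − e_{j+1}`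
and the last row is zero. -/
def Dmat (L : ℕ) : Matrix (Fin L) (Fin L) ℝ := fun i j =>
  if (i : ℕ) + 1 < L then
    (if j = i then 1 else if (j : ℕ) = (i : ℕ) + 1 then -1 else 0)
  else 0

/-!
Write `g = ∇L(x₀𝟏)` and `wⱼ = ∑_{i ≤ j} gᵢ`. Since `x₀𝟏` has zero total variation, `Q` is the set of
constant vectors of `C`; as `x₀𝟏` is interior and minimises `L` on `Q`, first-order optimality along
`±𝟏` gives `∑ᵢ gᵢ = 0`. Summation by parts then gives `⟪g, χ⟫ = ∑ⱼ wⱼ (χⱼ - χⱼ₊₁)`, hence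
`|⟪g, χ⟫| ≤ (maxⱼ |wⱼ|) ‖Ψᵀχ‖₁`, and the gradient inequality of `L` puts `x₀𝟏` in `X_u` for
`u = maxⱼ |wⱼ|`. Conversely, if `X_u ∩ Q ≠ ∅` then `x₀𝟏 ∈ X_u`, and moving from `x₀𝟏` along
`±𝟏_{i ≤ j}`, which increases the total variation by exactly the step length, forces `|wⱼ| ≤ u`.
-/

open Filter Topology

section Calculus

variable {E : Type*} [NormedAddCommGroup E] [InnerProductSpace ℝ E] [CompleteSpace E]
  {L : E → ℝ} {g x : E}

lemma HasGradientAt.hasDerivAt_comp_add_smul (hg : HasGradientAt L g x) (d : E) :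
    HasDerivAt (fun t : ℝ => L (x + t • d)) ⟪g, d⟫ 0 := by
  have hline : HasDerivAt (fun t : ℝ => x + t • d) d 0 := by
    simpa using ((hasDerivAt_id (0 : ℝ)).smul_const d).const_add x
  have hL : HasFDerivAt L (InnerProductSpace.toDual ℝ E g) (x + (0 : ℝ) • d) := by
    simpa using hg.hasFDerivAt
  simpa [Function.comp_def] using hL.comp_hasDerivAt 0 hline

lemma ConvexOn.add_inner_sub_le_of_hasGradientAt (hL : ConvexOn ℝ Set.univ L)
    (hg : HasGradientAt L g x) (y : E) : L x + ⟪g, y - x⟫ ≤ L y := by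
  have hφ : ConvexOn ℝ Set.univ fun t : ℝ => L (x + t • (y - x)) := by
    simpa [Function.comp_def, AffineMap.lineMap_apply_module', add_comm]
      using hL.comp_affineMap (AffineMap.lineMap x y)
  have := hφ.le_slope_of_hasDerivAt (Set.mem_univ 0) (Set.mem_univ 1) one_pos
    (hg.hasDerivAt_comp_add_smul (y - x))
  simp only [slope_def_field, one_smul, add_sub_cancel, zero_smul, add_zero, sub_zero,
    div_one] at this
  linarith

lemma neg_le_inner_of_forall_le_add_mul {C : Set E} {d : E} {c : ℝ}
    (hg : HasGradientAt L g x) (hx : x ∈ interior C)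
    (h : ∀ t : ℝ, 0 < t → x + t • d ∈ C → L x ≤ L (x + t • d) + c * t) : -c ≤ ⟪g, d⟫ := by
  have hslope : Tendsto (slope (fun t : ℝ => L (x + t • d)) 0) (𝓝[>] 0) (𝓝 ⟪g, d⟫) :=
    (hasDerivAt_iff_tendsto_slope.mp (hg.hasDerivAt_comp_add_smul d)).mono_left
      (nhdsWithin_mono _ fun t ht => ne_of_gt ht)
  have hmem : ∀ᶠ t in 𝓝 (0 : ℝ), x + t • d ∈ C := by
    have hcont : Continuous fun t : ℝ => x + t • d := by fun_prop
    exact hcont.continuousAt.eventually_mem (by simpa using mem_interior_iff_mem_nhds.mp hx)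
  refine ge_of_tendsto hslope ?_
  filter_upwards [nhdsWithin_le_nhds hmem, self_mem_nhdsWithin] with t htC (ht : 0 < t)
  rw [slope_def_field, le_div_iff₀ (by simpa using ht)]
  simpa using h t ht htC

end Calculus

open Finset

section SummationByParts

lemma abs_sum_range_mul_le_of_sum_eq_zero {a c : ℕ → ℝ} {n : ℕ} {M : ℝ}
    (ha : ∑ i ∈ range n, a i = 0) (hM : ∀ i < n - 1, |∑ k ∈ range (i + 1), a k| ≤ M) :
    |∑ i ∈ range n, a i * c i| ≤ M * ∑ i ∈ range (n - 1), |c i - c (i + 1)| := by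
  have habel : ∑ i ∈ range n, a i * c i =
      ∑ i ∈ range (n - 1), (c i - c (i + 1)) * ∑ k ∈ range (i + 1), a k := by
    have := sum_range_by_parts c a n
    simp only [smul_eq_mul, ha, mul_zero, zero_sub] at this
    rw [← sum_neg_distrib] at this
    simp_rw [mul_comm (a _), this, ← neg_mul, neg_sub]
  rw [habel, mul_sum]
  refine (abs_sum_le_sum_abs _ _).trans (sum_le_sum fun i hi => ?_)
  rw [abs_mul, mul_comm M]
  exact mul_le_mul_of_nonneg_left (hM i (mem_range.mp hi)) (abs_nonneg _)

end SummationByParts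

section TotalVariation

variable {p : ℕ}

def extendByZero (x : Fin p → ℝ) (k : ℕ) : ℝ := if h : k < p then x ⟨k, h⟩ else 0

@[simp] lemma extendByZero_val (x : Fin p → ℝ) (i : Fin p) : extendByZero x i = x i := by
  simp [extendByZero]

lemma Dmat_row_of_lt {i : Fin p} (h : (i : ℕ) + 1 < p) :
    Dmat p i = Pi.single i 1 - Pi.single ⟨i + 1, h⟩ 1 := by
  funext j
  by_cases hj : j = i
  · subst hj; simp [Dmat, h, Fin.ext_iff]
  · simp only [Dmat, h, hj, if_true, if_false, Pi.sub_apply, Pi.single_apply, Fin.ext_iff]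
    split_ifs <;> simp

lemma psiT_Dmat_apply (x : EuclideanSpace ℝ (Fin p)) (i : Fin p) :
    psiT (Dmat p)ᵀ x i =
      if (i : ℕ) + 1 < p then extendByZero x i - extendByZero x (i + 1) else 0 := by
  simp only [psiT, transpose_transpose, mulVec]
  split_ifs with h
  · rw [Dmat_row_of_lt h, sub_dotProduct, single_one_dotProduct, single_one_dotProduct]
    simp [extendByZero, h]
  · simp [Dmat, h]

lemma rnorm1_psiT_Dmat (x : EuclideanSpace ℝ (Fin p)) :
    rnorm1 (psiT (Dmat p)ᵀ x) =
      ∑ k ∈ range (p - 1), |extendByZero x k - extendByZero x (k + 1)| := by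
  simp only [rnorm1, psiT_Dmat_apply, apply_ite abs, abs_zero]
  rw [Fin.sum_univ_eq_sum_range (fun k => if k + 1 < p then
    |extendByZero x k - extendByZero x (k + 1)| else 0), ← sum_filter]
  congr 1
  ext k
  simp only [mem_filter, Finset.mem_range]
  omega

end TotalVariation

section ConstantAndStepVectors

variable {p : ℕ}

lemma real_inner_eq_sum_range_extendByZero (x y : EuclideanSpace ℝ (Fin p)) :
    ⟪x, y⟫ = ∑ k ∈ range p, extendByZero x k * extendByZero y k := by
  rw [← Fin.sum_univ_eq_sum_range (fun k => extendByZero x k * extendByZero y k)]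
  simp [PiLp.inner_apply, mul_comm]

def constVec (p : ℕ) (c : ℝ) : EuclideanSpace ℝ (Fin p) := WithLp.toLp 2 fun _ => c

def stepVec (p j : ℕ) : EuclideanSpace ℝ (Fin p) :=
  WithLp.toLp 2 fun i => if (i : ℕ) ≤ j then 1 else 0

lemma constVec_add_smul_constVec (c t σ : ℝ) :
    constVec p c + t • constVec p σ = constVec p (c + t * σ) := by
  ext; simp [constVec]

lemma real_inner_constVec (g : EuclideanSpace ℝ (Fin p)) (c : ℝ) :
    ⟪g, constVec p c⟫ = c * ∑ i, g i := by
  simp [constVec, PiLp.inner_apply, mul_sum]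

lemma real_inner_stepVec (g : EuclideanSpace ℝ (Fin p)) (j : ℕ) :
    ⟪g, stepVec p j⟫ = ∑ i : Fin p, if (i : ℕ) ≤ j then g i else 0 := by
  simp [stepVec, PiLp.inner_apply]

lemma real_inner_stepVec_eq_sum_range (g : EuclideanSpace ℝ (Fin p)) {j : ℕ} (hj : j < p) :
    ⟪g, stepVec p j⟫ = ∑ k ∈ range (j + 1), extendByZero g k := by
  rw [real_inner_stepVec]
  calc (∑ i : Fin p, if (i : ℕ) ≤ j then g i else 0)
      = ∑ k ∈ range p, if k ≤ j then extendByZero g k else 0 := by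
        rw [← Fin.sum_univ_eq_sum_range]; simp
    _ = ∑ k ∈ range (j + 1), extendByZero g k := by
        rw [← sum_filter]
        congr 1
        ext k
        simp only [mem_filter, Finset.mem_range]
        omega

lemma rnorm1_nonneg {n : ℕ} (z : Fin n → ℝ) : 0 ≤ rnorm1 z :=
  sum_nonneg fun _ _ => abs_nonneg _

lemma rnorm1_psiT_Dmat_constVec (c : ℝ) : rnorm1 (psiT (Dmat p)ᵀ (constVec p c)) = 0 := by
  rw [rnorm1_psiT_Dmat]
  refine sum_eq_zero fun k hk => ?_
  have := Finset.mem_range.mp hk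
  simp [extendByZero, constVec, show k < p by omega, show k + 1 < p by omega]

lemma rnorm1_psiT_Dmat_constVec_add_smul_stepVec {j : ℕ} (hj : j + 1 < p) (c t : ℝ) :
    rnorm1 (psiT (Dmat p)ᵀ (constVec p c + t • stepVec p j)) = |t| := by
  have hdiff : ∀ k ∈ range (p - 1),
      |extendByZero (constVec p c + t • stepVec p j) k -
        extendByZero (constVec p c + t • stepVec p j) (k + 1)| = if k = j then |t| else 0 := by
    intro k hk
    have hk := Finset.mem_range.mp hk
    simp only [extendByZero, show k < p by omega, show k + 1 < p by omega, dif_pos]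
    by_cases hkj : k = j
    · simp [constVec, stepVec, hkj]
    · by_cases hle : k ≤ j
      · simp [constVec, stepVec, hkj, hle, show k + 1 ≤ j by omega]
      · simp [constVec, stepVec, hkj, hle, show ¬k + 1 ≤ j by omega]
  rw [rnorm1_psiT_Dmat, sum_congr rfl hdiff, sum_ite_eq']
  simp [show j < p - 1 by omega]

lemma abs_real_inner_le_mul_rnorm1_psiT_Dmat {g : EuclideanSpace ℝ (Fin p)} {M : ℝ}
    (hg : ∑ i, g i = 0) (hM : ∀ j, j + 1 < p → |⟪g, stepVec p j⟫| ≤ M)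
    (χ : EuclideanSpace ℝ (Fin p)) :
    |⟪g, χ⟫| ≤ M * rnorm1 (psiT (Dmat p)ᵀ χ) := by
  rw [real_inner_eq_sum_range_extendByZero, rnorm1_psiT_Dmat]
  refine abs_sum_range_mul_le_of_sum_eq_zero ?_ fun i hi => ?_
  · rwa [← Fin.sum_univ_eq_sum_range (extendByZero g),
      sum_congr rfl fun i _ => extendByZero_val g i]
  · rw [← real_inner_stepVec_eq_sum_range g (by omega)]
    exact hM i (by omega)

end ConstantAndStepVectors

section Optimality

lemma mem_XuSetR_of_mem_XdSetR {p q : ℕ} {C : Set (EuclideanSpace ℝ (Fin p))}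
    {L : EuclideanSpace ℝ (Fin p) → ℝ} {Ψ : Matrix (Fin p) (Fin q) ℝ} {u : ℝ}
    {x : EuclideanSpace ℝ (Fin p)} (hx : x ∈ XdSetR C L Ψ)
    (hne : (XuSetR C L Ψ u ∩ QSetR C Ψ).Nonempty) : x ∈ XuSetR C L Ψ u := by
  obtain ⟨y, ⟨-, hy⟩, hyQ⟩ := hne
  obtain ⟨hxQ, hxmin⟩ := hx
  have hnorm : rnorm1 (psiT Ψ x) = rnorm1 (psiT Ψ y) :=
    le_antisymm (hxQ.2 y hyQ.1) (hyQ.2 x hxQ.1)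
  refine ⟨hxQ.1, fun χ hχ => ?_⟩
  rw [hnorm]
  linarith [hy χ hχ, hxmin y hyQ]

variable {p : ℕ} {C : Set (EuclideanSpace ℝ (Fin p))} {L : EuclideanSpace ℝ (Fin p) → ℝ}
  {g : EuclideanSpace ℝ (Fin p)} {x₀ : ℝ}

lemma constVec_mem_QSetR {c : ℝ} (hc : constVec p c ∈ C) : constVec p c ∈ QSetR C (Dmat p)ᵀ :=
  ⟨hc, fun _ _ => (rnorm1_psiT_Dmat_constVec c).symm ▸ rnorm1_nonneg _⟩

lemma sum_eq_zero_of_constVec_mem_XdSetR (hg : HasGradientAt L g (constVec p x₀))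
    (hx : constVec p x₀ ∈ XdSetR C L (Dmat p)ᵀ) (hint : constVec p x₀ ∈ interior C) :
    ∑ i, g i = 0 := by
  have key : ∀ σ : ℝ, 0 ≤ σ * ∑ i, g i := fun σ => by
    have := neg_le_inner_of_forall_le_add_mul (c := 0) (d := constVec p σ) hg hint
      fun t _ htC => by
        rw [constVec_add_smul_constVec] at htC ⊢
        simpa using hx.2 _ (constVec_mem_QSetR htC)
    rwa [neg_zero, real_inner_constVec] at this
  linarith [key 1, key (-1)]

lemma abs_real_inner_stepVec_le {u : ℝ} (hg : HasGradientAt L g (constVec p x₀))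
    (hx : constVec p x₀ ∈ XuSetR C L (Dmat p)ᵀ u) (hint : constVec p x₀ ∈ interior C)
    {j : ℕ} (hj : j + 1 < p) : |⟪g, stepVec p j⟫| ≤ u := by
  have key : ∀ σ : ℝ, |σ| = 1 → -u ≤ σ * ⟪g, stepVec p j⟫ := fun σ hσ => by
    rw [← real_inner_smul_right]
    refine neg_le_inner_of_forall_le_add_mul hg hint fun t ht htC => ?_
    rw [smul_smul] at htC ⊢
    have := hx.2 _ htC
    rwa [rnorm1_psiT_Dmat_constVec_add_smul_stepVec hj, rnorm1_psiT_Dmat_constVec,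
      abs_mul, hσ, abs_of_pos ht, mul_one, mul_zero, add_zero] at this
  rw [abs_le]
  constructor <;> linarith [key 1 (by simp), key (-1) (by simp)]

lemma constVec_mem_XuSetR {M : ℝ} (hL : ConvexOn ℝ Set.univ L)
    (hg : HasGradientAt L g (constVec p x₀)) (hC : constVec p x₀ ∈ C) (hsum : ∑ i, g i = 0)
    (hM : ∀ j, j + 1 < p → |⟪g, stepVec p j⟫| ≤ M) :
    constVec p x₀ ∈ XuSetR C L (Dmat p)ᵀ M := by
  refine ⟨hC, fun χ _ => ?_⟩
  have hgrad := hL.add_inner_sub_le_of_hasGradientAt hg χ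
  rw [inner_sub_right, real_inner_constVec, hsum, mul_zero, sub_zero] at hgrad
  have hdual := abs_real_inner_le_mul_rnorm1_psiT_Dmat hsum hM χ
  rw [rnorm1_psiT_Dmat_constVec, mul_zero, add_zero]
  linarith [neg_abs_le ⟪g, χ⟫]

end Optimality

theorem statement_16_general {p : ℕ}
    (C : Set (EuclideanSpace ℝ (Fin p)))
    (L : EuclideanSpace ℝ (Fin p) → ℝ) (hLcv : ConvexOn ℝ Set.univ L)
    (gradL : EuclideanSpace ℝ (Fin p) → EuclideanSpace ℝ (Fin p))
    (hLd : ∀ x, HasGradientAt L (gradL x) x)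
    (x₀ : ℝ)
    (hx : (WithLp.toLp 2 (fun _ => x₀ : Fin p → ℝ) : EuclideanSpace ℝ (Fin p)) ∈
      XdSetR C L ((Dmat p)ᵀ) ∩ interior C) :
    UboundR C L ((Dmat p)ᵀ) =
      ENNReal.ofReal (⨆ j : Fin (p - 1),
        |∑ i : Fin p, if (i : ℕ) ≤ (j : ℕ) then gradL (WithLp.toLp 2 (fun _ => x₀)) i else 0|) := by
  set g := gradL (constVec p x₀)
  obtain ⟨hxd, hint⟩ := hx
  have hg : HasGradientAt L g (constVec p x₀) := hLd _
  have hsum := sum_eq_zero_of_constVec_mem_XdSetR hg hxd hint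
  simp_rw [← real_inner_stepVec]
  set M := ⨆ j : Fin (p - 1), |⟪g, stepVec p j⟫|
  have hM : ∀ j, j + 1 < p → |⟪g, stepVec p j⟫| ≤ M := fun j hj =>
    le_ciSup (f := fun j : Fin (p - 1) => |⟪g, stepVec p j⟫|) (Set.finite_range _).bddAbove
      ⟨j, by omega⟩
  apply le_antisymm
  · exact sInf_le ⟨M, ⟨Real.iSup_nonneg fun _ => abs_nonneg _, _,
      constVec_mem_XuSetR hLcv hg hxd.1.1 hsum hM, hxd.1⟩, rfl⟩
  · refine le_sInf ?_
    rintro _ ⟨u, ⟨hu, hne⟩, rfl⟩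
    refine ENNReal.ofReal_le_ofReal (Real.iSup_le (fun j => ?_) hu)
    exact abs_real_inner_stepVec_le hg (mem_XuSetR_of_mem_XdSetR hxd hne) hint
      (by have := j.isLt; omega)

theorem statement_16 {p : ℕ} (hp : 2 ≤ p)
    (C : Set (EuclideanSpace ℝ (Fin p))) (hCne : C.Nonempty) (hCcl : IsClosed C)
    (hCcv : Convex ℝ C)
    (L : EuclideanSpace ℝ (Fin p) → ℝ) (hLcv : ConvexOn ℝ Set.univ L)
    (gradL : EuclideanSpace ℝ (Fin p) → EuclideanSpace ℝ (Fin p))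
    (hLd : ∀ x, HasGradientAt L (gradL x) x)
    (hLb : BddBelow (L '' C))
    (x₀ : ℝ)
    (hx : (WithLp.toLp 2 (fun _ => x₀ : Fin p → ℝ) : EuclideanSpace ℝ (Fin p)) ∈
      XdSetR C L ((Dmat p)ᵀ) ∩ interior C) :
    UboundR C L ((Dmat p)ᵀ) =
      ENNReal.ofReal (⨆ j : Fin (p - 1),
        |∑ i : Fin p, if (i : ℕ) ≤ (j : ℕ) then gradL (WithLp.toLp 2 (fun _ => x₀)) i else 0|) :=
  statement_16_general C L hLcv gradL hLd x₀ hx
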